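/- arXiv:2405.19579 — 2 statements merged into one kernel-verified Lean document; each statement's English description precedes it below -/
import Mathlib

section
/- Let X be a Banach lattice and Y a Banach sequence lattice. Then ℓ₀^{τ,Y}(X), the closure of the eventually zero sequences in ℓ^{τ,Y}(X), is an ideal, and hence a closed sublattice, of ℓ^{τ,Y}(X); in particular ℓ₀^{τ,Y}(X) is itself a Banach lattice. -/
open Filter Topology

/-- A Banach sequence lattice: a Banach function space over `ℕ` with counting measure,
an ideal of sequences with an order-preserving (monotone) complete norm, containing all
canonical unit vectors. -/
structure BanachSeqLattice where
  Mem : (ℕ → ℝ) → Prop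
  nrm : (ℕ → ℝ) → ℝ
  zero_mem : Mem 0
  add_mem : ∀ {f g : ℕ → ℝ}, Mem f → Mem g → Mem (f + g)
  smul_mem : ∀ (c : ℝ) {f : ℕ → ℝ}, Mem f → Mem (c • f)
  ideal : ∀ {f g : ℕ → ℝ}, (∀ n, |f n| ≤ |g n|) → Mem g → Mem f
  nrm_mono : ∀ {f g : ℕ → ℝ}, Mem g → (∀ n, |f n| ≤ |g n|) → nrm f ≤ nrm g
  nrm_nonneg : ∀ f : ℕ → ℝ, 0 ≤ nrm f
  nrm_eq_zero_iff : ∀ {f : ℕ → ℝ}, Mem f → (nrm f = 0 ↔ f = 0)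
  nrm_add_le : ∀ {f g : ℕ → ℝ}, Mem f → Mem g → nrm (f + g) ≤ nrm f + nrm g
  nrm_smul : ∀ (c : ℝ) (f : ℕ → ℝ), nrm (c • f) = |c| * nrm f
  unit_mem : ∀ n : ℕ, Mem (fun k => if k = n then 1 else 0)
  complete : ∀ u : ℕ → (ℕ → ℝ), (∀ m, Mem (u m)) →
    (∀ ε : ℝ, 0 < ε → ∃ N, ∀ m, N ≤ m → ∀ k, N ≤ k → nrm (u m - u k) < ε) →
    ∃ f, Mem f ∧ Filter.Tendsto (fun m => nrm (u m - f)) Filter.atTop (nhds 0)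

/-- Continuous positively 1-homogeneous functions on `ℝⁿ` (the space `𝓗_n`). -/
def Hom1 (n : ℕ) (h : (Fin n → ℝ) → ℝ) : Prop :=
  Continuous h ∧ ∀ c : ℝ, 0 ≤ c → ∀ t, h (c • t) = c * h t

/-- Extension of a finite vector to a sequence, by zero. -/
def finSeq (n : ℕ) (t : Fin n → ℝ) : ℕ → ℝ :=
  fun k => if hk : k < n then t ⟨k, hk⟩ else 0

/-- The element `‖(x₁,...,x_n)‖_Y ∈ X` given by Krivine's functional calculus `τ`. -/
noncomputable def vY (Y : BanachSeqLattice) {X : Type*} [NormedAddCommGroup X] [Lattice X] [HasSolidNorm X] [IsOrderedAddMonoid X]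
    (τ : ∀ n : ℕ, (Fin n → X) → ((Fin n → ℝ) → ℝ) → X)
    (n : ℕ) (x : Fin n → X) : X :=
  τ n x (fun t => Y.nrm (finSeq n t))

/-- The norm of the space `ℓ^{τ,Y}(X)`: `sup_n ‖ ‖(x₁,...,x_n)‖_Y ‖_X`. -/
noncomputable def Tnrm (Y : BanachSeqLattice) {X : Type*} [NormedAddCommGroup X] [Lattice X] [HasSolidNorm X] [IsOrderedAddMonoid X]
    (τ : ∀ n : ℕ, (Fin n → X) → ((Fin n → ℝ) → ℝ) → X) (x : ℕ → X) : ℝ :=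
  ⨆ n : ℕ, ‖vY Y τ n (fun j : Fin n => x (j : ℕ))‖

/-- Membership in `ℓ^{τ,Y}(X)`. -/
def Tmem (Y : BanachSeqLattice) {X : Type*} [NormedAddCommGroup X] [Lattice X] [HasSolidNorm X] [IsOrderedAddMonoid X]
    (τ : ∀ n : ℕ, (Fin n → X) → ((Fin n → ℝ) → ℝ) → X) (x : ℕ → X) : Prop :=
  BddAbove (Set.range fun n : ℕ => ‖vY Y τ n (fun j : Fin n => x (j : ℕ))‖)

/-- Membership in `ℓ₀^{τ,Y}(X)`, the closure of the eventually zero sequences. -/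
def T0mem (Y : BanachSeqLattice) {X : Type*} [NormedAddCommGroup X] [Lattice X] [HasSolidNorm X] [IsOrderedAddMonoid X]
    (τ : ∀ n : ℕ, (Fin n → X) → ((Fin n → ℝ) → ℝ) → X) (x : ℕ → X) : Prop :=
  Tmem Y τ x ∧ ∀ ε : ℝ, 0 < ε → ∃ v : ℕ → X,
    (∃ N, ∀ j, N ≤ j → v j = 0) ∧ Tnrm Y τ (x - v) < ε

/-!
Write `p` for the lattice norm `t ↦ ‖(t₁, …, tₙ)‖_Y` on `ℝⁿ`. The calculus `τ n x` is additive,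
homogeneous and preserves `⊔` on positively homogeneous functions, so it is explicit on linear
functionals and their finite suprema. By Hahn–Banach and compactness of the unit ball, `p` is,
up to `ε ∑ |tⱼ|`, a finite supremum of linear functionals below it, and since `p` is solid each
such functional `φ` satisfies `∑ |φ eⱼ| |tⱼ| ≤ p t`. Hence `‖(x₁, …, xₙ)‖_Y = τ n x p` is monotone in
the `|xⱼ|` and subadditive, and `pⱼ |xⱼ| ≤ τ n x p ≤ ∑ pⱼ |xⱼ|` with `pⱼ = ‖eⱼ‖_Y > 0`, so it is
continuous in `x`.

Monotonicity makes `ℓ₀^{τ,Y}(X)` an ideal: truncate `x` where the finitely supported approximant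
of `z` vanishes. An ideal closed under addition is a sublattice, as `|x ⊔ z| ≤ |x| + |z|`. A
Cauchy sequence converges coordinatewise by the lower bound, and by continuity the Cauchy bounds
pass to the coordinatewise limit.
-/

theorem nonneg_of_two_pow_nsmul_nonneg {G : Type*} [AddCommGroup G] [Lattice G]
    [IsOrderedAddMonoid G] {a : G} : ∀ k : ℕ, 0 ≤ 2 ^ k • a → 0 ≤ a
  | 0, h => by simpa using h
  | k + 1, h => nonneg_of_two_pow_nsmul_nonneg k <| nsmul_two_semiclosed <| by
      rwa [← mul_nsmul', ← pow_succ']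

theorem abs_sup_le_abs_add_abs {G : Type*} [AddCommGroup G] [Lattice G] [IsOrderedAddMonoid G]
    (a b : G) : |a ⊔ b| ≤ |a| + |b| := by
  refine abs_le'.2 ⟨sup_le ?_ ?_, ?_⟩
  · exact (le_abs_self a).trans (le_add_of_nonneg_right (abs_nonneg b))
  · exact (le_abs_self b).trans (le_add_of_nonneg_left (abs_nonneg a))
  · rw [neg_sup]
    exact inf_le_left.trans ((neg_le_abs a).trans (le_add_of_nonneg_right (abs_nonneg b)))

section NormedLattice

variable {X : Type*} [NormedAddCommGroup X] [Lattice X] [HasSolidNorm X] [IsOrderedAddMonoid X]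

theorem norm_le_norm_of_zero_le_of_le {a b : X} (ha : 0 ≤ a) (hab : a ≤ b) : ‖a‖ ≤ ‖b‖ :=
  norm_le_norm_of_abs_le_abs (by rwa [abs_of_nonneg ha, abs_of_nonneg (ha.trans hab)])

variable [NormedSpace ℝ X]

/-- The order of `X` is not assumed compatible with scalars; positivity of `c • a` comes from the
closedness of the positive cone, approximating `c` by the dyadic numbers `⌊2ᵏ c⌋₊ / 2ᵏ`. -/
theorem smul_nonneg_of_hasSolidNorm {c : ℝ} {a : X} (hc : 0 ≤ c) (ha : 0 ≤ a) : 0 ≤ c • a := by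
  have hdyadic : ∀ k : ℕ, 0 ≤ ((⌊c * 2 ^ k⌋₊ : ℝ) / 2 ^ k) • a := fun k =>
    nonneg_of_two_pow_nsmul_nonneg k <| by
      rw [← Nat.cast_smul_eq_nsmul ℝ, smul_smul, Nat.cast_pow, Nat.cast_ofNat,
        mul_div_cancel₀ _ (by positivity), Nat.cast_smul_eq_nsmul]
      exact nsmul_nonneg ha _
  have hlim : Tendsto (fun k : ℕ => (⌊c * 2 ^ k⌋₊ : ℝ) / 2 ^ k) atTop (𝓝 c) :=
    (tendsto_nat_floor_mul_div_atTop hc).comp (tendsto_pow_atTop_atTop_of_one_lt one_lt_two)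
  exact ge_of_tendsto (hlim.smul_const a) (Eventually.of_forall hdyadic)

instance HasSolidNorm.toPosSMulMono : PosSMulMono ℝ X :=
  PosSMulMono.of_smul_nonneg fun _ hc _ ha => smul_nonneg_of_hasSolidNorm hc ha

theorem smul_le_abs_smul_abs (c : ℝ) (a : X) : c • a ≤ |c| • |a| := by
  rcases le_total 0 c with hc | hc
  · rw [abs_of_nonneg hc]
    exact smul_le_smul_of_nonneg_left (le_abs_self a) hc
  · calc c • a = (-c) • (-a) := (neg_smul_neg c a).symm
      _ ≤ |c| • |a| := by
        rw [abs_of_nonpos hc]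
        exact smul_le_smul_of_nonneg_left (neg_le_abs a) (neg_nonneg.2 hc)

theorem le_of_forall_pos_le_add_smul {a b w : X} (h : ∀ ε : ℝ, 0 < ε → b ≤ a + ε • w) : b ≤ a := by
  have hcont : Continuous fun ε : ℝ => a + ε • w := by fun_prop
  have hlim : Tendsto (fun ε : ℝ => a + ε • w) (𝓝[>] 0) (𝓝 a) := by
    simpa using (hcont.tendsto 0).mono_left nhdsWithin_le_nhds
  exact ge_of_tendsto hlim (eventually_nhdsWithin_of_forall h)

end NormedLattice

section Hom1

variable {n : ℕ} {f g : (Fin n → ℝ) → ℝ}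

theorem hom1_zero (n : ℕ) : Hom1 n 0 :=
  ⟨continuous_const, fun c _ t => by simp⟩

theorem hom1_apply (j : Fin n) : Hom1 n (fun t => t j) :=
  ⟨continuous_apply j, fun c _ t => by simp⟩

theorem hom1_abs_apply (j : Fin n) : Hom1 n (fun t => |t j|) :=
  ⟨(continuous_apply j).abs, fun c hc t => by simp [abs_mul, abs_of_nonneg hc]⟩

theorem Hom1.add (hf : Hom1 n f) (hg : Hom1 n g) : Hom1 n (f + g) :=
  ⟨hf.1.add hg.1, fun c hc t => by simp only [Pi.add_apply, hf.2 c hc t, hg.2 c hc t]; ring⟩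

theorem Hom1.const_smul (hf : Hom1 n f) (c : ℝ) : Hom1 n (c • f) :=
  ⟨hf.1.const_smul c, fun d hd t => by simp only [Pi.smul_apply, smul_eq_mul, hf.2 d hd t]; ring⟩

theorem Hom1.sup (hf : Hom1 n f) (hg : Hom1 n g) : Hom1 n (f ⊔ g) :=
  ⟨hf.1.sup hg.1, fun c hc t => by
    simp only [Pi.sup_apply, hf.2 c hc t, hg.2 c hc t, mul_max_of_nonneg _ _ hc]⟩

theorem hom1_sum {ι : Type*} (s : Finset ι) {f : ι → (Fin n → ℝ) → ℝ}
    (hf : ∀ i ∈ s, Hom1 n (f i)) : Hom1 n (∑ i ∈ s, f i) :=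
  Finset.sum_induction f (Hom1 n) (fun _ _ => Hom1.add) (hom1_zero n) hf

end Hom1

section SupportFunctionals

variable {E : Type*} [AddCommGroup E] [Module ℝ E]

theorem Seminorm.exists_dual_le_eq (p : Seminorm ℝ E) (s : E) :
    ∃ φ : Module.Dual ℝ E, (∀ t, φ t ≤ p t) ∧ φ s = p s := by
  have hker : ∀ c : ℝ, c • s = 0 → (RingHom.id ℝ) c • p s = 0 := fun c hcs => by
    have h : |c| * p s = 0 := by rw [← Real.norm_eq_abs, ← map_smul_eq_mul, hcs, map_zero]
    rcases mul_eq_zero.1 h with hc | hs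
    · simp [abs_eq_zero.1 hc]
    · simp [hs]
  set f := LinearPMap.mkSpanSingleton' s (p s) hker
  have hfp : ∀ x, f.toFun x ≤ p x := by
    rintro ⟨x, hx⟩
    obtain ⟨c, rfl⟩ := Submodule.mem_span_singleton.1 hx
    calc f.toFun ⟨c • s, hx⟩ = c * p s := LinearPMap.mkSpanSingleton'_apply s (p s) hker c hx
      _ ≤ ‖c‖ * p s := mul_le_mul_of_nonneg_right (Real.le_norm_self c) (apply_nonneg p s)
      _ = p (c • s) := (map_smul_eq_mul p c s).symm
  obtain ⟨φ, hφf, hφp⟩ := Module.Dual.exists_extension_of_le_seminorm_real _ f.toFun hfp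
  refine ⟨φ, fun t => (le_abs_self _).trans (hφp t), ?_⟩
  exact (hφf ⟨s, Submodule.mem_span_singleton_self s⟩).trans
    (LinearPMap.mkSpanSingleton'_apply_self s (p s) hker _)

end SupportFunctionals

section FiniteDimensional

variable {E : Type*} [NormedAddCommGroup E] [NormedSpace ℝ E] [FiniteDimensional ℝ E]

/-- By compactness of the unit ball. -/
theorem Seminorm.exists_finset_dual_approx (p : Seminorm ℝ E) (hp : Continuous p) {ε : ℝ}
    (hε : 0 < ε) :
    ∃ S : Finset (Module.Dual ℝ E), S.Nonempty ∧ (∀ φ ∈ S, ∀ t, φ t ≤ p t) ∧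
      ∀ t, ∃ φ ∈ S, p t ≤ φ t + ε * ‖t‖ := by
  classical
  choose φ hφp hφs using p.exists_dual_le_eq
  set U : E → Set E := fun s => {t | p t < φ s t + ε}
  have hUopen : ∀ s, IsOpen (U s) := fun s =>
    isOpen_lt hp ((LinearMap.continuous_of_finiteDimensional (φ s)).add continuous_const)
  have hcover : Metric.closedBall (0 : E) 1 ⊆ ⋃ s, U s := fun t _ =>
    Set.mem_iUnion.2 ⟨t, by simpa [U, hφs t] using hε⟩
  obtain ⟨S, hS⟩ := (isCompact_closedBall (0 : E) 1).elim_finite_subcover U hUopen hcover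
  have hball : ∀ t ∈ Metric.closedBall (0 : E) 1, ∃ s ∈ S, p t < φ s t + ε := fun t ht => by
    simpa [U] using hS ht
  obtain ⟨s₀, hs₀, -⟩ := hball 0 (Metric.mem_closedBall_self zero_le_one)
  refine ⟨S.image φ, ⟨φ s₀, Finset.mem_image_of_mem φ hs₀⟩, by simpa using fun s _ => hφp s, ?_⟩
  intro t
  rcases eq_or_ne t 0 with rfl | ht
  · exact ⟨φ s₀, Finset.mem_image_of_mem φ hs₀, by simp⟩
  have hr : 0 < ‖t‖ := norm_pos_iff.2 ht
  obtain ⟨s, hs, hlt⟩ := hball (‖t‖⁻¹ • t) (by simp [norm_smul, hr.ne'])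
  refine ⟨φ s, Finset.mem_image_of_mem φ hs, ?_⟩
  rw [map_smul_eq_mul, map_smul, smul_eq_mul, Real.norm_of_nonneg (inv_nonneg.2 hr.le),
    ← sub_lt_iff_lt_add', ← mul_sub, inv_mul_lt_iff₀ hr] at hlt
  linarith

end FiniteDimensional

section FinSeminorm

variable {n : ℕ}

def Seminorm.IsSolid {E : Type*} [AddCommGroup E] [Lattice E] [Module ℝ E] (p : Seminorm ℝ E) :
    Prop :=
  ∀ ⦃s t : E⦄, |s| ≤ |t| → p s ≤ p t

theorem norm_le_sum_abs (t : Fin n → ℝ) : ‖t‖ ≤ ∑ j, |t j| :=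
  (pi_norm_le_iff_of_nonneg (Finset.sum_nonneg fun j _ => abs_nonneg (t j))).2 fun j => by
    rw [Real.norm_eq_abs]
    exact Finset.single_le_sum (f := fun j => |t j|) (fun j _ => abs_nonneg (t j))
      (Finset.mem_univ j)

theorem Seminorm.le_sum_abs_mul_single (p : Seminorm ℝ (Fin n → ℝ)) (t : Fin n → ℝ) :
    p t ≤ ∑ j, |t j| * p (Pi.single j 1) :=
  calc p t = p (∑ j, t j • Pi.single j 1) := by rw [← pi_eq_sum_univ' t]
    _ ≤ ∑ j, p (t j • Pi.single j 1) :=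
      Finset.le_sum_of_subadditive p (map_zero p).le (map_add_le_add p) _ _
    _ = ∑ j, |t j| * p (Pi.single j 1) := by simp_rw [map_smul_eq_mul, Real.norm_eq_abs]

theorem Seminorm.continuous_of_fin (p : Seminorm ℝ (Fin n → ℝ)) : Continuous p := by
  refine (LipschitzWith.of_dist_le_mul (K := (∑ j, p (Pi.single j 1)).toNNReal)
    fun s t => ?_).continuous
  rw [Real.dist_eq, dist_eq_norm, Real.coe_toNNReal _ (Finset.sum_nonneg fun j _ => apply_nonneg p _),
    Finset.sum_mul]
  refine (abs_sub_map_le_sub p s t).trans ((p.le_sum_abs_mul_single _).trans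
    (Finset.sum_le_sum fun j _ => ?_))
  rw [mul_comm]
  exact mul_le_mul_of_nonneg_left (norm_le_pi_norm (s - t) j) (apply_nonneg p _)

theorem Seminorm.hom1 (p : Seminorm ℝ (Fin n → ℝ)) : Hom1 n p :=
  ⟨p.continuous_of_fin, fun c hc t => by rw [map_smul_eq_mul, Real.norm_of_nonneg hc]⟩

theorem LinearMap.hom1 (φ : Module.Dual ℝ (Fin n → ℝ)) : Hom1 n φ :=
  ⟨LinearMap.continuous_of_finiteDimensional φ, fun c _ t => by rw [map_smul, smul_eq_mul]⟩

theorem LinearMap.apply_eq_sum_mul_single (φ : Module.Dual ℝ (Fin n → ℝ)) (t : Fin n → ℝ) :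
    φ t = ∑ j, φ (Pi.single j 1) * t j := by
  conv_lhs => rw [pi_eq_sum_univ' t]
  simp [map_sum, map_smul, mul_comm]

end FinSeminorm

structure IsKrivineCalculus {X : Type*} [AddCommGroup X] [Lattice X] [Module ℝ X]
    (τ : ∀ n : ℕ, (Fin n → X) → ((Fin n → ℝ) → ℝ) → X) : Prop where
  map_add : ∀ (n : ℕ) (x : Fin n → X) (h₁ h₂ : (Fin n → ℝ) → ℝ), Hom1 n h₁ → Hom1 n h₂ →
    τ n x (h₁ + h₂) = τ n x h₁ + τ n x h₂
  map_smul : ∀ (n : ℕ) (x : Fin n → X) (c : ℝ) (h : (Fin n → ℝ) → ℝ), Hom1 n h →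
    τ n x (c • h) = c • τ n x h
  map_sup : ∀ (n : ℕ) (x : Fin n → X) (h₁ h₂ : (Fin n → ℝ) → ℝ), Hom1 n h₁ → Hom1 n h₂ →
    τ n x (h₁ ⊔ h₂) = τ n x h₁ ⊔ τ n x h₂
  map_apply : ∀ (n : ℕ) (x : Fin n → X) (j : Fin n), τ n x (fun t => t j) = x j

namespace IsKrivineCalculus

section VectorLattice

variable {X : Type*} [AddCommGroup X] [Lattice X] [Module ℝ X]
  {τ : ∀ n : ℕ, (Fin n → X) → ((Fin n → ℝ) → ℝ) → X} {n : ℕ} {f g : (Fin n → ℝ) → ℝ}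
  {p : Seminorm ℝ (Fin n → ℝ)}

theorem map_zero (hτ : IsKrivineCalculus τ) (x : Fin n → X) : τ n x 0 = 0 := by
  simpa using hτ.map_smul n x 0 0 (hom1_zero n)

theorem mono (hτ : IsKrivineCalculus τ) (x : Fin n → X) (hf : Hom1 n f) (hg : Hom1 n g)
    (hfg : f ≤ g) : τ n x f ≤ τ n x g := by
  rw [← sup_eq_right.2 hfg, hτ.map_sup n x f g hf hg]
  exact le_sup_left

theorem map_sum (hτ : IsKrivineCalculus τ) (x : Fin n → X) {ι : Type*} (s : Finset ι)
    {f : ι → (Fin n → ℝ) → ℝ} (hf : ∀ i ∈ s, Hom1 n (f i)) :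
    τ n x (∑ i ∈ s, f i) = ∑ i ∈ s, τ n x (f i) := by
  classical
  induction s using Finset.induction_on with
  | empty => simpa using hτ.map_zero x
  | insert i s hi ih =>
    have hs : ∀ j ∈ s, Hom1 n (f j) := fun j hj => hf j (Finset.mem_insert_of_mem hj)
    rw [Finset.sum_insert hi, Finset.sum_insert hi,
      hτ.map_add n x _ _ (hf i (Finset.mem_insert_self i s)) (hom1_sum s hs), ih hs]

theorem map_sum_smul (hτ : IsKrivineCalculus τ) (x : Fin n → X) (w : Fin n → ℝ)
    {f : Fin n → (Fin n → ℝ) → ℝ} (hf : ∀ j, Hom1 n (f j)) :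
    τ n x (∑ j, w j • f j) = ∑ j, w j • τ n x (f j) := by
  rw [hτ.map_sum x _ fun j _ => (hf j).const_smul (w j)]
  exact Finset.sum_congr rfl fun j _ => hτ.map_smul n x (w j) (f j) (hf j)

theorem map_abs_apply (hτ : IsKrivineCalculus τ) (x : Fin n → X) (j : Fin n) :
    τ n x (fun t => |t j|) = |x j| := by
  have h : (fun t : Fin n → ℝ => |t j|) = (fun t => t j) ⊔ (-1 : ℝ) • fun t => t j := by
    funext t
    simp [abs_eq_max_neg]
  rw [h, hτ.map_sup n x _ _ (hom1_apply j) ((hom1_apply j).const_smul _),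
    hτ.map_smul n x _ _ (hom1_apply j), hτ.map_apply, neg_one_smul]
  rfl

theorem map_dual (hτ : IsKrivineCalculus τ) (x : Fin n → X) (φ : Module.Dual ℝ (Fin n → ℝ)) :
    τ n x φ = ∑ j, φ (Pi.single j 1) • x j := by
  have h : ⇑φ = ∑ j, φ (Pi.single j 1) • fun t : Fin n → ℝ => t j := by
    funext t
    simp [φ.apply_eq_sum_mul_single t, Finset.sum_apply]
  conv_lhs => rw [h, hτ.map_sum_smul x _ fun j => hom1_apply j]
  simp only [hτ.map_apply]

theorem hom1_and_map_sup'_le (hτ : IsKrivineCalculus τ) (x : Fin n → X)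
    {S : Finset (Module.Dual ℝ (Fin n → ℝ))} (hS : S.Nonempty) {T : X}
    (hT : ∀ φ ∈ S, ∑ j, φ (Pi.single j 1) • x j ≤ T) :
    Hom1 n (S.sup' hS fun φ => ⇑φ) ∧ τ n x (S.sup' hS fun φ => ⇑φ) ≤ T :=
  Finset.sup'_induction (p := fun g => Hom1 n g ∧ τ n x g ≤ T) hS _
    (fun _ h₁ _ h₂ => ⟨h₁.1.sup h₂.1, by
      rw [hτ.map_sup n x _ _ h₁.1 h₂.1]
      exact sup_le h₁.2 h₂.2⟩)
    fun φ hφ => ⟨φ.hom1, by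
      rw [hτ.map_dual]
      exact hT φ hφ⟩

theorem map_sum_smul_abs (hτ : IsKrivineCalculus τ) (x : Fin n → X) (w : Fin n → ℝ) :
    τ n x (∑ j, w j • fun t => |t j|) = ∑ j, w j • |x j| := by
  rw [hτ.map_sum_smul x _ fun j => hom1_abs_apply j]
  simp only [hτ.map_abs_apply]

theorem map_nonneg (hτ : IsKrivineCalculus τ) (p : Seminorm ℝ (Fin n → ℝ)) (x : Fin n → X) :
    0 ≤ τ n x p := by
  rw [← hτ.map_zero x]
  exact hτ.mono x (hom1_zero n) (p.hom1) fun t => apply_nonneg p t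

theorem sum_abs_smul_abs_le (hτ : IsKrivineCalculus τ) (hp : p.IsSolid) (x : Fin n → X)
    {φ : Module.Dual ℝ (Fin n → ℝ)} (hφ : ∀ t, φ t ≤ p t) :
    ∑ j, |φ (Pi.single j 1)| • |x j| ≤ τ n x p := by
  rw [← hτ.map_sum_smul_abs]
  refine hτ.mono x (hom1_sum _ fun j _ => (hom1_abs_apply j).const_smul _)
    (p.hom1) fun t => ?_
  set u : Fin n → ℝ := fun j => SignType.sign (φ (Pi.single j 1)) * |t j|
  calc (∑ j, |φ (Pi.single j 1)| • fun t : Fin n → ℝ => |t j|) t = φ u := by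
        simp only [Finset.sum_apply, Pi.smul_apply, smul_eq_mul, φ.apply_eq_sum_mul_single u, u,
          ← mul_assoc, self_mul_sign]
    _ ≤ p u := hφ u
    _ ≤ p t := hp fun j => show |u j| ≤ |t j| by
        rw [abs_mul, abs_abs]
        refine mul_le_of_le_one_left (abs_nonneg _) ?_
        cases SignType.sign (φ (Pi.single j 1)) <;> simp

theorem le_sum_smul_abs (hτ : IsKrivineCalculus τ) (p : Seminorm ℝ (Fin n → ℝ))
    (x : Fin n → X) : τ n x p ≤ ∑ j, p (Pi.single j 1) • |x j| := by
  rw [← hτ.map_sum_smul_abs]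
  refine hτ.mono x (p.hom1)
    (hom1_sum _ fun j _ => (hom1_abs_apply j).const_smul _) fun t => ?_
  simpa [Finset.sum_apply, mul_comm] using p.le_sum_abs_mul_single t

theorem smul_abs_le (hτ : IsKrivineCalculus τ) (hp : p.IsSolid) (x : Fin n → X) (j : Fin n) :
    p (Pi.single j 1) • |x j| ≤ τ n x p := by
  rw [← hτ.map_abs_apply, ← hτ.map_smul n x _ _ (hom1_abs_apply j)]
  refine hτ.mono x ((hom1_abs_apply j).const_smul _) (p.hom1) fun t => ?_
  calc (p (Pi.single j 1) • fun t : Fin n → ℝ => |t j|) t = p (t j • Pi.single j 1) := by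
        simp [map_smul_eq_mul, mul_comm]
    _ ≤ p t := by
        refine hp fun k => ?_
        simp only [Pi.abs_apply, Pi.smul_apply, smul_eq_mul]
        rcases eq_or_ne k j with rfl | hk
        · simp
        · simp [hk]

end VectorLattice

end IsKrivineCalculus

namespace IsKrivineCalculus

variable {X : Type*} [NormedAddCommGroup X] [Lattice X] [HasSolidNorm X] [IsOrderedAddMonoid X]
  [NormedSpace ℝ X] {τ : ∀ n : ℕ, (Fin n → X) → ((Fin n → ℝ) → ℝ) → X} {n : ℕ}
  {p : Seminorm ℝ (Fin n → ℝ)}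

/-- `p` is, up to `ε`, a finite supremum of linear functionals below it, on which `τ` is explicit. -/
theorem le_of_forall_dual_le (hτ : IsKrivineCalculus τ) (p : Seminorm ℝ (Fin n → ℝ))
    {x : Fin n → X} {T : X}
    (hT : ∀ φ : Module.Dual ℝ (Fin n → ℝ), (∀ t, φ t ≤ p t) → ∑ j, φ (Pi.single j 1) • x j ≤ T) :
    τ n x p ≤ T := by
  refine le_of_forall_pos_le_add_smul (w := ∑ j, |x j|) fun ε hε => ?_
  obtain ⟨S, hS, hSp, happrox⟩ := p.exists_finset_dual_approx p.continuous_of_fin hε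
  obtain ⟨hg, hgT⟩ := hτ.hom1_and_map_sup'_le x hS fun φ hφ => hT φ (hSp φ hφ)
  set g := S.sup' hS fun φ => ⇑φ
  set ℓ₁ : (Fin n → ℝ) → ℝ := ∑ j, fun t => |t j|
  have hℓ₁ : Hom1 n ℓ₁ := hom1_sum _ fun j _ => hom1_abs_apply j
  have hpg : ⇑p ≤ g + ε • ℓ₁ := fun t => by
    obtain ⟨φ, hφ, hpt⟩ := happrox t
    simp only [g, ℓ₁, Pi.add_apply, Pi.smul_apply, Finset.sum_apply, smul_eq_mul]
    exact hpt.trans (add_le_add (Finset.le_sup' (fun φ : Module.Dual ℝ (Fin n → ℝ) => ⇑φ) hφ t)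
      (mul_le_mul_of_nonneg_left (norm_le_sum_abs t) hε.le))
  calc τ n x p ≤ τ n x (g + ε • ℓ₁) := hτ.mono x p.hom1 (hg.add (hℓ₁.const_smul ε)) hpg
    _ = τ n x g + ε • ∑ j, |x j| := by
        rw [hτ.map_add n x _ _ hg (hℓ₁.const_smul ε), hτ.map_smul n x _ _ hℓ₁,
          hτ.map_sum x _ fun j _ => hom1_abs_apply j]
        simp only [hτ.map_abs_apply]
    _ ≤ T + ε • ∑ j, |x j| := add_le_add_left hgT _

theorem sum_smul_le (hτ : IsKrivineCalculus τ) (hp : p.IsSolid) (x : Fin n → X)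
    {φ : Module.Dual ℝ (Fin n → ℝ)} (hφ : ∀ t, φ t ≤ p t) :
    ∑ j, φ (Pi.single j 1) • x j ≤ τ n x p :=
  (Finset.sum_le_sum fun _ _ => smul_le_abs_smul_abs _ _).trans (hτ.sum_abs_smul_abs_le hp x hφ)

theorem mono_abs (hτ : IsKrivineCalculus τ) (hp : p.IsSolid) {x z : Fin n → X}
    (h : ∀ j, |x j| ≤ |z j|) : τ n x p ≤ τ n z p :=
  hτ.le_of_forall_dual_le p fun _ hφ =>
    (Finset.sum_le_sum fun j _ => (smul_le_abs_smul_abs _ _).trans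
      (smul_le_smul_of_nonneg_left (h j) (abs_nonneg _))).trans (hτ.sum_abs_smul_abs_le hp z hφ)

theorem map_add_le (hτ : IsKrivineCalculus τ) (hp : p.IsSolid) (x y : Fin n → X) :
    τ n (x + y) p ≤ τ n x p + τ n y p :=
  hτ.le_of_forall_dual_le p fun φ hφ => by
    simp only [Pi.add_apply, smul_add, Finset.sum_add_distrib]
    exact add_le_add (hτ.sum_smul_le hp x hφ) (hτ.sum_smul_le hp y hφ)

theorem abs_sub_le (hτ : IsKrivineCalculus τ) (hp : p.IsSolid) (x y : Fin n → X) :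
    |τ n x p - τ n y p| ≤ τ n (x - y) p := by
  have hxy := hτ.map_add_le hp (x - y) y
  have hyx := hτ.map_add_le hp (y - x) x
  have hsymm : τ n (y - x) p = τ n (x - y) p := le_antisymm
    (hτ.mono_abs hp fun _ => (abs_sub_comm _ _).le) (hτ.mono_abs hp fun _ => (abs_sub_comm _ _).le)
  rw [sub_add_cancel] at hxy
  rw [sub_add_cancel, hsymm] at hyx
  refine abs_le'.2 ⟨sub_le_iff_le_add.2 hxy, ?_⟩
  rw [neg_sub]
  exact sub_le_iff_le_add.2 hyx

theorem norm_le_sum (hτ : IsKrivineCalculus τ) (x : Fin n → X) :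
    ‖τ n x p‖ ≤ ∑ j, p (Pi.single j 1) * ‖x j‖ := by
  refine (norm_le_norm_of_zero_le_of_le (hτ.map_nonneg p x) (hτ.le_sum_smul_abs p x)).trans
    ((norm_sum_le _ _).trans (le_of_eq (Finset.sum_congr rfl fun j _ => ?_)))
  rw [norm_smul, norm_abs_eq_norm, Real.norm_of_nonneg (apply_nonneg p _)]

theorem mul_norm_le_norm (hτ : IsKrivineCalculus τ) (hp : p.IsSolid) (x : Fin n → X) (j : Fin n) :
    p (Pi.single j 1) * ‖x j‖ ≤ ‖τ n x p‖ := by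
  have h := norm_le_norm_of_zero_le_of_le
    (smul_nonneg (apply_nonneg p _) (abs_nonneg (x j))) (hτ.smul_abs_le hp x j)
  rwa [norm_smul, norm_abs_eq_norm, Real.norm_of_nonneg (apply_nonneg p _)] at h

theorem norm_map_add_le (hτ : IsKrivineCalculus τ) (hp : p.IsSolid) (x y : Fin n → X) :
    ‖τ n (x + y) p‖ ≤ ‖τ n x p‖ + ‖τ n y p‖ :=
  (norm_le_norm_of_zero_le_of_le (hτ.map_nonneg p _) (hτ.map_add_le hp x y)).trans
    (norm_add_le _ _)

theorem norm_mono_abs (hτ : IsKrivineCalculus τ) (hp : p.IsSolid) {x z : Fin n → X}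
    (h : ∀ j, |x j| ≤ |z j|) : ‖τ n x p‖ ≤ ‖τ n z p‖ :=
  norm_le_norm_of_zero_le_of_le (hτ.map_nonneg p x) (hτ.mono_abs hp h)

theorem continuous (hτ : IsKrivineCalculus τ) (hp : p.IsSolid) :
    Continuous fun x : Fin n → X => τ n x p := by
  refine (LipschitzWith.of_dist_le_mul (K := (∑ j, p (Pi.single j 1)).toNNReal)
    fun x y => ?_).continuous
  rw [dist_eq_norm, dist_eq_norm,
    Real.coe_toNNReal _ (Finset.sum_nonneg fun j _ => apply_nonneg p _), Finset.sum_mul]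
  calc ‖τ n x p - τ n y p‖ ≤ ‖τ n (x - y) p‖ :=
        norm_le_norm_of_abs_le_abs (by
          rw [abs_of_nonneg (hτ.map_nonneg p _)]
          exact hτ.abs_sub_le hp x y)
    _ ≤ ∑ j, p (Pi.single j 1) * ‖(x - y) j‖ := hτ.norm_le_sum (x - y)
    _ ≤ ∑ j, p (Pi.single j 1) * ‖x - y‖ := Finset.sum_le_sum fun j _ =>
        mul_le_mul_of_nonneg_left (norm_le_pi_norm (x - y) j) (apply_nonneg p _)

end IsKrivineCalculus

theorem finSeq_eq_sum (n : ℕ) (t : Fin n → ℝ) :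
    finSeq n t = ∑ j : Fin n, t j • Pi.single (j : ℕ) 1 := by
  funext k
  simp only [finSeq, Finset.sum_apply, Pi.smul_apply, Pi.single_apply, smul_eq_mul, mul_ite,
    mul_one, mul_zero]
  split_ifs with hk
  · rw [Finset.sum_eq_single ⟨k, hk⟩ (fun j _ hj => if_neg fun h => hj (Fin.ext h.symm))
      (fun h => absurd (Finset.mem_univ _) h), if_pos rfl]
  · exact (Finset.sum_eq_zero fun (j : Fin n) _ => if_neg fun (h : k = j) => hk (h ▸ j.isLt)).symm

theorem finSeq_add (n : ℕ) (s t : Fin n → ℝ) : finSeq n (s + t) = finSeq n s + finSeq n t := by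
  simp only [finSeq_eq_sum, Pi.add_apply, add_smul, Finset.sum_add_distrib]

theorem finSeq_smul (n : ℕ) (c : ℝ) (t : Fin n → ℝ) : finSeq n (c • t) = c • finSeq n t := by
  simp only [finSeq_eq_sum, Pi.smul_apply, smul_eq_mul, mul_smul, Finset.smul_sum]

theorem finSeq_single (n : ℕ) (j : Fin n) : finSeq n (Pi.single j 1) = Pi.single (j : ℕ) 1 := by
  rw [finSeq_eq_sum, Finset.sum_eq_single j (fun i _ hi => by simp [hi])
    (fun h => absurd (Finset.mem_univ _) h)]
  simp

namespace BanachSeqLattice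

variable (Y : BanachSeqLattice)

theorem mem_single (j : ℕ) : Y.Mem (Pi.single j 1) := by
  convert Y.unit_mem j using 1
  funext k
  simp [Pi.single_apply]

theorem nrm_single_pos (j : ℕ) : 0 < Y.nrm (Pi.single j 1) :=
  (Y.nrm_nonneg _).lt_of_ne fun h => by
    simpa using congrFun ((Y.nrm_eq_zero_iff (Y.mem_single j)).1 h.symm) j

theorem mem_finSeq (n : ℕ) (t : Fin n → ℝ) : Y.Mem (finSeq n t) := by
  rw [finSeq_eq_sum]
  exact Finset.sum_induction _ Y.Mem (fun _ _ => Y.add_mem) Y.zero_mem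
    fun j _ => Y.smul_mem _ (Y.mem_single j)

/-- `t ↦ ‖(t₁, …, tₙ)‖_Y`, so that `vY Y τ n x = τ n x (Y.finSeminorm n)`. -/
noncomputable def finSeminorm (n : ℕ) : Seminorm ℝ (Fin n → ℝ) :=
  Seminorm.of (fun t => Y.nrm (finSeq n t))
    (fun s t => by
      rw [finSeq_add]
      exact Y.nrm_add_le (Y.mem_finSeq n s) (Y.mem_finSeq n t))
    (fun c t => by rw [finSeq_smul, Y.nrm_smul, Real.norm_eq_abs])

theorem finSeminorm_apply (n : ℕ) (t : Fin n → ℝ) : Y.finSeminorm n t = Y.nrm (finSeq n t) :=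
  rfl

theorem finSeminorm_isSolid (n : ℕ) : (Y.finSeminorm n).IsSolid := fun s t h =>
  Y.nrm_mono (Y.mem_finSeq n t) fun k => by
    by_cases hk : k < n
    · simpa [finSeq, hk] using h ⟨k, hk⟩
    · simp [finSeq, hk]

theorem finSeminorm_single (n : ℕ) (j : Fin n) :
    Y.finSeminorm n (Pi.single j 1) = Y.nrm (Pi.single (j : ℕ) 1) := by
  rw [finSeminorm_apply, finSeq_single]

end BanachSeqLattice

section SequenceSpace

variable {X : Type*} [NormedAddCommGroup X] [Lattice X] [HasSolidNorm X] [IsOrderedAddMonoid X]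
  {Y : BanachSeqLattice} {τ : ∀ n : ℕ, (Fin n → X) → ((Fin n → ℝ) → ℝ) → X} {x y z : ℕ → X}

theorem Tnrm_nonneg (Y : BanachSeqLattice) (τ : ∀ n : ℕ, (Fin n → X) → ((Fin n → ℝ) → ℝ) → X)
    (x : ℕ → X) : 0 ≤ Tnrm Y τ x :=
  Real.iSup_nonneg fun _ => norm_nonneg _

theorem norm_vY_le_Tnrm (hx : Tmem Y τ x) (n : ℕ) :
    ‖vY Y τ n (fun j : Fin n => x j)‖ ≤ Tnrm Y τ x :=
  le_ciSup hx n

theorem Tmem_of_forall_le {C : ℝ} (h : ∀ n, ‖vY Y τ n (fun j : Fin n => x j)‖ ≤ C) :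
    Tmem Y τ x :=
  ⟨C, by
    rintro _ ⟨n, rfl⟩
    exact h n⟩

theorem Tnrm_le_of_forall_le {C : ℝ} (h : ∀ n, ‖vY Y τ n (fun j : Fin n => x j)‖ ≤ C) :
    Tnrm Y τ x ≤ C :=
  ciSup_le h

variable [NormedSpace ℝ X]

theorem Tmem.of_abs_le (hτ : IsKrivineCalculus τ) (hz : Tmem Y τ z) (h : ∀ j, |x j| ≤ |z j|) :
    Tmem Y τ x :=
  Tmem_of_forall_le fun n =>
    (hτ.norm_mono_abs (Y.finSeminorm_isSolid n) fun j => h j).trans (norm_vY_le_Tnrm hz n)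

theorem Tnrm_le_of_abs_le (hτ : IsKrivineCalculus τ) (hz : Tmem Y τ z) (h : ∀ j, |x j| ≤ |z j|) :
    Tnrm Y τ x ≤ Tnrm Y τ z :=
  Tnrm_le_of_forall_le fun n =>
    (hτ.norm_mono_abs (Y.finSeminorm_isSolid n) fun j => h j).trans (norm_vY_le_Tnrm hz n)

theorem Tmem.add (hτ : IsKrivineCalculus τ) (hx : Tmem Y τ x) (hy : Tmem Y τ y) :
    Tmem Y τ (x + y) :=
  Tmem_of_forall_le fun n => (hτ.norm_map_add_le (Y.finSeminorm_isSolid n) _ _).trans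
    (add_le_add (norm_vY_le_Tnrm hx n) (norm_vY_le_Tnrm hy n))

theorem Tnrm_add_le (hτ : IsKrivineCalculus τ) (hx : Tmem Y τ x) (hy : Tmem Y τ y) :
    Tnrm Y τ (x + y) ≤ Tnrm Y τ x + Tnrm Y τ y :=
  Tnrm_le_of_forall_le fun n => (hτ.norm_map_add_le (Y.finSeminorm_isSolid n) _ _).trans
    (add_le_add (norm_vY_le_Tnrm hx n) (norm_vY_le_Tnrm hy n))

theorem Tmem.sub (hτ : IsKrivineCalculus τ) (hx : Tmem Y τ x) (hy : Tmem Y τ y) :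
    Tmem Y τ (x - y) := by
  rw [sub_eq_add_neg]
  exact hx.add hτ (hy.of_abs_le hτ fun j => (abs_neg (y j)).le)

theorem Tmem_of_eventually_zero (hτ : IsKrivineCalculus τ) {v : ℕ → X} {N : ℕ}
    (hv : ∀ j, N ≤ j → v j = 0) : Tmem Y τ v := by
  refine Tmem_of_forall_le (C := ∑ j ∈ Finset.range N, Y.nrm (Pi.single j 1) * ‖v j‖) fun n => ?_
  refine (hτ.norm_le_sum (p := Y.finSeminorm n) fun j : Fin n => v j).trans ?_
  simp_rw [Y.finSeminorm_single]
  rw [Fin.sum_univ_eq_sum_range (fun j => Y.nrm (Pi.single j 1) * ‖v j‖) n]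
  rcases le_total n N with hnN | hNn
  · exact Finset.sum_le_sum_of_subset_of_nonneg (Finset.range_subset_range.2 hnN)
      fun j _ _ => mul_nonneg (Y.nrm_nonneg _) (norm_nonneg _)
  · refine (Finset.sum_subset (Finset.range_subset_range.2 hNn) fun j _ hj => ?_).ge
    rw [hv j (by simpa using hj), norm_zero, mul_zero]

theorem mul_norm_le_Tnrm (hτ : IsKrivineCalculus τ) (hx : Tmem Y τ x) (j : ℕ) :
    Y.nrm (Pi.single j 1) * ‖x j‖ ≤ Tnrm Y τ x := by
  have h := hτ.mul_norm_le_norm (Y.finSeminorm_isSolid (j + 1)) (fun i : Fin (j + 1) => x i)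
    (Fin.last j)
  rw [Y.finSeminorm_single] at h
  exact h.trans (norm_vY_le_Tnrm hx (j + 1))

/-- Fatou property of `ℓ^{τ,Y}(X)`. -/
theorem Tmem_and_Tnrm_le_of_tendsto (hτ : IsKrivineCalculus τ) {u : ℕ → ℕ → X} {w : ℕ → X}
    (hu : ∀ k, Tmem Y τ (u k)) (hlim : ∀ j, Tendsto (fun k => u k j) atTop (𝓝 (w j))) {C : ℝ}
    (hC : ∀ᶠ k in atTop, Tnrm Y τ (u k) ≤ C) : Tmem Y τ w ∧ Tnrm Y τ w ≤ C := by
  have hbound : ∀ n, ‖vY Y τ n (fun j : Fin n => w j)‖ ≤ C := fun n => by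
    have hvY : Tendsto (fun k => ‖vY Y τ n (fun j : Fin n => u k j)‖) atTop
        (𝓝 ‖vY Y τ n (fun j : Fin n => w j)‖) :=
      (((hτ.continuous (Y.finSeminorm_isSolid n)).tendsto _).comp
        (tendsto_pi_nhds.2 fun j => hlim j)).norm
    exact le_of_tendsto hvY (hC.mono fun k hk => (norm_vY_le_Tnrm (hu k) n).trans hk)
  exact ⟨Tmem_of_forall_le hbound, Tnrm_le_of_forall_le hbound⟩

theorem cauchySeq_apply_of_Tnrm (hτ : IsKrivineCalculus τ) {u : ℕ → ℕ → X}
    (hu : ∀ m, Tmem Y τ (u m))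
    (hcauchy : ∀ ε : ℝ, 0 < ε → ∃ N, ∀ m, N ≤ m → ∀ k, N ≤ k → Tnrm Y τ (u m - u k) < ε)
    (j : ℕ) : CauchySeq fun m => u m j := by
  refine Metric.cauchySeq_iff.2 fun ε hε => ?_
  obtain ⟨N, hN⟩ := hcauchy (Y.nrm (Pi.single j 1) * ε) (mul_pos (Y.nrm_single_pos j) hε)
  refine ⟨N, fun m hm k hk => ?_⟩
  rw [dist_eq_norm]
  exact lt_of_mul_lt_mul_left
    ((mul_norm_le_Tnrm hτ ((hu m).sub hτ (hu k)) j).trans_lt (hN m hm k hk)) (Y.nrm_nonneg _)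

end SequenceSpace

section EventuallyZeroClosure

variable {X : Type*} [NormedAddCommGroup X] [Lattice X] [HasSolidNorm X] [IsOrderedAddMonoid X]
  [NormedSpace ℝ X] {Y : BanachSeqLattice} {τ : ∀ n : ℕ, (Fin n → X) → ((Fin n → ℝ) → ℝ) → X}
  {x y z : ℕ → X}

theorem T0mem.of_abs_le (hτ : IsKrivineCalculus τ) (hz : T0mem Y τ z) (h : ∀ j, |x j| ≤ |z j|) :
    T0mem Y τ x := by
  refine ⟨hz.1.of_abs_le hτ h, fun ε hε => ?_⟩
  obtain ⟨v, ⟨N, hv⟩, hzv⟩ := hz.2 ε hε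
  refine ⟨fun j => if j < N then x j else 0, ⟨N, fun j hj => if_neg (not_lt.2 hj)⟩, ?_⟩
  refine (Tnrm_le_of_abs_le hτ (hz.1.sub hτ (Tmem_of_eventually_zero hτ hv)) fun j => ?_).trans_lt
    hzv
  by_cases hj : j < N
  · simp [hj]
  · simp [hj, hv j (not_lt.1 hj), h j]

theorem T0mem.add (hτ : IsKrivineCalculus τ) (hx : T0mem Y τ x) (hy : T0mem Y τ y) :
    T0mem Y τ (x + y) := by
  refine ⟨hx.1.add hτ hy.1, fun ε hε => ?_⟩
  obtain ⟨v, ⟨N, hv⟩, hxv⟩ := hx.2 (ε / 2) (half_pos hε)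
  obtain ⟨w, ⟨M, hw⟩, hyw⟩ := hy.2 (ε / 2) (half_pos hε)
  refine ⟨v + w, ⟨max N M, fun j hj => ?_⟩, ?_⟩
  · simp [hv j (le_of_max_le_left hj), hw j (le_of_max_le_right hj)]
  · rw [show x + y - (v + w) = (x - v) + (y - w) by abel]
    calc _ ≤ Tnrm Y τ (x - v) + Tnrm Y τ (y - w) :=
          Tnrm_add_le hτ (hx.1.sub hτ (Tmem_of_eventually_zero hτ hv))
            (hy.1.sub hτ (Tmem_of_eventually_zero hτ hw))
      _ < ε := by linarith

theorem T0mem.sup (hτ : IsKrivineCalculus τ) (hx : T0mem Y τ x) (hz : T0mem Y τ z) :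
    T0mem Y τ (fun j => x j ⊔ z j) :=
  ((hx.of_abs_le hτ fun j => (abs_abs (x j)).le).add hτ
    (hz.of_abs_le hτ fun j => (abs_abs (z j)).le)).of_abs_le hτ
    fun j => (abs_sup_le_abs_add_abs (x j) (z j)).trans (le_abs_self _)

theorem T0mem_of_forall_Tnrm_sub_lt (hτ : IsKrivineCalculus τ) (hx : Tmem Y τ x)
    (happrox : ∀ ε : ℝ, 0 < ε → ∃ y, T0mem Y τ y ∧ Tnrm Y τ (y - x) < ε) : T0mem Y τ x := by
  refine ⟨hx, fun ε hε => ?_⟩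
  obtain ⟨y, hy, hyx⟩ := happrox (ε / 2) (half_pos hε)
  obtain ⟨v, hv, hyv⟩ := hy.2 (ε / 2) (half_pos hε)
  obtain ⟨N, hvN⟩ := hv
  refine ⟨v, ⟨N, hvN⟩, ?_⟩
  have hyxmem : Tmem Y τ (y - x) := hy.1.sub hτ hx
  rw [show x - v = (x - y) + (y - v) by abel]
  calc _ ≤ Tnrm Y τ (x - y) + Tnrm Y τ (y - v) :=
        Tnrm_add_le hτ (hyxmem.of_abs_le hτ fun j => (abs_sub_comm _ _).le)
          (hy.1.sub hτ (Tmem_of_eventually_zero hτ hvN))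
    _ ≤ Tnrm Y τ (y - x) + Tnrm Y τ (y - v) :=
        add_le_add_left (Tnrm_le_of_abs_le hτ hyxmem fun j => (abs_sub_comm _ _).le) _
    _ < ε := by linarith

theorem exists_T0mem_tendsto_of_cauchy [CompleteSpace X] (hτ : IsKrivineCalculus τ)
    {u : ℕ → ℕ → X} (hu : ∀ m, T0mem Y τ (u m))
    (hcauchy : ∀ ε : ℝ, 0 < ε → ∃ N, ∀ m, N ≤ m → ∀ k, N ≤ k → Tnrm Y τ (u m - u k) < ε) :
    ∃ x, T0mem Y τ x ∧ Tendsto (fun m => Tnrm Y τ (u m - x)) atTop (𝓝 0) := by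
  have hmem : ∀ m, Tmem Y τ (u m) := fun m => (hu m).1
  choose x hx using fun j =>
    cauchySeq_tendsto_of_complete (cauchySeq_apply_of_Tnrm hτ hmem hcauchy j)
  have htail : ∀ ε : ℝ, 0 < ε → ∃ N, ∀ m, N ≤ m → Tmem Y τ (u m - x) ∧ Tnrm Y τ (u m - x) ≤ ε := by
    intro ε hε
    obtain ⟨N, hN⟩ := hcauchy ε hε
    refine ⟨N, fun m hm => Tmem_and_Tnrm_le_of_tendsto hτ (fun k => (hmem m).sub hτ (hmem k))
      (fun j => (hx j).const_sub (u m j)) ?_⟩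
    filter_upwards [eventually_ge_atTop N] with k hk using (hN m hm k hk).le
  obtain ⟨N₀, hN₀⟩ := htail 1 one_pos
  have hxmem : Tmem Y τ x := by simpa using (hmem N₀).sub hτ (hN₀ N₀ le_rfl).1
  refine ⟨x, T0mem_of_forall_Tnrm_sub_lt hτ hxmem fun ε hε => ?_, ?_⟩
  · obtain ⟨N, hN⟩ := htail (ε / 2) (half_pos hε)
    exact ⟨u N, hu N, (hN N le_rfl).2.trans_lt (half_lt_self hε)⟩
  · refine Metric.tendsto_atTop.2 fun ε hε => ?_
    obtain ⟨N, hN⟩ := htail (ε / 2) (half_pos hε)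
    refine ⟨N, fun m hm => ?_⟩
    rw [Real.dist_eq, sub_zero, abs_of_nonneg (Tnrm_nonneg Y τ _)]
    exact (hN m hm).2.trans_lt (half_lt_self hε)

end EventuallyZeroClosure

/-- `ℓ₀^{τ,Y}(X)`, the closure of the eventually zero sequences in `ℓ^{τ,Y}(X)`, is an
ideal (hence a closed sublattice) of `ℓ^{τ,Y}(X)`; in particular it is itself a Banach
lattice. -/
theorem stmt14 (Y : BanachSeqLattice) {X : Type*}
    [NormedAddCommGroup X] [Lattice X] [HasSolidNorm X] [IsOrderedAddMonoid X] [NormedSpace ℝ X] [CompleteSpace X]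
    (τ : ∀ n : ℕ, (Fin n → X) → ((Fin n → ℝ) → ℝ) → X)
    (hadd : ∀ (n : ℕ) (x : Fin n → X) (h₁ h₂ : (Fin n → ℝ) → ℝ), Hom1 n h₁ → Hom1 n h₂ →
      τ n x (h₁ + h₂) = τ n x h₁ + τ n x h₂)
    (hsmul : ∀ (n : ℕ) (x : Fin n → X) (c : ℝ) (h : (Fin n → ℝ) → ℝ), Hom1 n h →
      τ n x (c • h) = c • τ n x h)
    (hsup : ∀ (n : ℕ) (x : Fin n → X) (h₁ h₂ : (Fin n → ℝ) → ℝ), Hom1 n h₁ → Hom1 n h₂ →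
      τ n x (h₁ ⊔ h₂) = τ n x h₁ ⊔ τ n x h₂)
    (hproj : ∀ (n : ℕ) (x : Fin n → X) (j : Fin n), τ n x (fun t => t j) = x j) :
    -- `ℓ₀^{τ,Y}(X)` is an ideal of `ℓ^{τ,Y}(X)`:
    (∀ x z : ℕ → X, (∀ j, |x j| ≤ |z j|) → T0mem Y τ z → T0mem Y τ x) ∧
    -- in particular it is a sublattice:
    (∀ x z : ℕ → X, T0mem Y τ x → T0mem Y τ z → T0mem Y τ (fun j => x j ⊔ z j)) ∧
    -- and, being closed, it is complete, hence a Banach lattice: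
    (∀ u : ℕ → (ℕ → X), (∀ m, T0mem Y τ (u m)) →
      (∀ ε : ℝ, 0 < ε → ∃ N, ∀ m, N ≤ m → ∀ k, N ≤ k → Tnrm Y τ (u m - u k) < ε) →
      ∃ x, T0mem Y τ x ∧
        Filter.Tendsto (fun m => Tnrm Y τ (u m - x)) Filter.atTop (nhds 0)) := by
  have hτ : IsKrivineCalculus τ := ⟨hadd, hsmul, hsup, hproj⟩
  exact ⟨fun x z h hz => hz.of_abs_le hτ h, fun x z hx hz => hx.sup hτ hz,
    fun u hu hcauchy => exists_T0mem_tendsto_of_cauchy hτ hu hcauchy⟩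
end

section
/- Let E be a Banach space and Y a Banach sequence lattice with Köthe dual Y^×. The map ρ : ℓ^{Y^×}(E*) → (ℓ₀^Y(E))* defined by ρ({φ_n})({w_n}) := Σ_{n=1}^∞ φ_n(w_n) is a well-defined isometric isomorphism; that is, (ℓ₀^Y(E))* = ℓ^{Y^×}(E*). -/
open Filter Topology

/-- Membership in the Köthe dual `Y^×` of a Banach sequence lattice. -/
def Kmem (Y : BanachSeqLattice) (β : ℕ → ℝ) : Prop :=
  ∀ α : ℕ → ℝ, Y.Mem α → Summable (fun n => |α n * β n|)

/-- The Köthe dual norm `‖β‖_{Y^×} = sup { Σ |α_n β_n| : ‖α‖_Y ≤ 1 }`. -/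
noncomputable def Knrm (Y : BanachSeqLattice) (β : ℕ → ℝ) : ℝ :=
  sSup {s : ℝ | ∃ α : ℕ → ℝ, Y.Mem α ∧ Y.nrm α ≤ 1 ∧ s = ∑' n, |α n * β n|}

/-- Membership in the vector sequence space `ℓ^Y(E)`. -/
def Lmem (Y : BanachSeqLattice) {E : Type*} [NormedAddCommGroup E] (w : ℕ → E) : Prop :=
  Y.Mem (fun j => ‖w j‖)

/-- The norm of `ℓ^Y(E)`. -/
noncomputable def Lnrm (Y : BanachSeqLattice) {E : Type*} [NormedAddCommGroup E]
    (w : ℕ → E) : ℝ :=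
  Y.nrm (fun j => ‖w j‖)

/-- Membership in `ℓ₀^Y(E)`, the closure of the eventually zero sequences in `ℓ^Y(E)`. -/
def L0mem (Y : BanachSeqLattice) {E : Type*} [NormedAddCommGroup E] (w : ℕ → E) : Prop :=
  Lmem Y w ∧ ∀ ε : ℝ, 0 < ε → ∃ v : ℕ → E,
    (∃ N, ∀ j, N ≤ j → v j = 0) ∧ Lnrm Y (w - v) < ε

namespace Stmt17Aux
set_option linter.unusedSectionVars false

variable (Y : BanachSeqLattice)

lemma nrm_zero : Y.nrm 0 = 0 := by
  have h := Y.nrm_smul 0 0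
  simpa using h

lemma mem_trunc (f : ℕ → ℝ) (N : ℕ) : Y.Mem (fun j => if j < N then f j else 0) := by
  induction N with
  | zero =>
      have : (fun j => if j < 0 then f j else 0) = (0 : ℕ → ℝ) := by
        funext j; simp
      rw [this]; exact Y.zero_mem
  | succ N ih =>
      have h : (fun j => if j < N + 1 then f j else 0)
          = ((fun j => if j < N then f j else 0) + (f N) • (fun k => if k = N then (1:ℝ) else 0) : ℕ → ℝ) := by
        funext j
        by_cases h1 : j = N
        · subst h1; simp
        · by_cases h2 : j < N
          · simp [h1, h2, Nat.lt_succ_of_lt h2]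
          · have h3 : ¬ j < N + 1 := by omega
            simp [h1, h2, h3]
      rw [h]
      exact Y.add_mem ih (Y.smul_mem _ (Y.unit_mem N))

lemma mem_of_evzero {f : ℕ → ℝ} {N : ℕ} (h : ∀ j, N ≤ j → f j = 0) : Y.Mem f := by
  have hf : f = fun j => if j < N then f j else 0 := by
    funext j
    by_cases hj : j < N
    · simp [hj]
    · simp [hj, h j (le_of_not_gt hj)]
  rw [hf]; exact mem_trunc Y f N

variable {E : Type*} [NormedAddCommGroup E] [NormedSpace ℝ E]

lemma lmem_of_evzero {v : ℕ → E} {N : ℕ} (h : ∀ j, N ≤ j → v j = 0) : Lmem Y v :=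
  mem_of_evzero Y (N := N) (fun j hj => by show ‖v j‖ = 0; rw [h j hj, norm_zero])

lemma lmem_add {w z : ℕ → E} (hw : Lmem Y w) (hz : Lmem Y z) : Lmem Y (w + z) := by
  refine Y.ideal (g := (fun j => ‖w j‖) + fun j => ‖z j‖) (fun n => ?_) (Y.add_mem hw hz)
  have h1 : (0:ℝ) ≤ ‖w n‖ + ‖z n‖ := by positivity
  rw [abs_of_nonneg (norm_nonneg _)]
  show ‖w n + z n‖ ≤ |‖w n‖ + ‖z n‖|
  rw [abs_of_nonneg h1]
  exact norm_add_le _ _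

lemma lmem_sub {w z : ℕ → E} (hw : Lmem Y w) (hz : Lmem Y z) : Lmem Y (w - z) := by
  refine Y.ideal (g := (fun j => ‖w j‖) + fun j => ‖z j‖) (fun n => ?_) (Y.add_mem hw hz)
  have h1 : (0:ℝ) ≤ ‖w n‖ + ‖z n‖ := by positivity
  rw [abs_of_nonneg (norm_nonneg _)]
  show ‖w n - z n‖ ≤ |‖w n‖ + ‖z n‖|
  rw [abs_of_nonneg h1]
  exact norm_sub_le _ _

lemma lmem_smul (c : ℝ) {w : ℕ → E} (hw : Lmem Y w) : Lmem Y (c • w) := by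
  have h : (fun j => ‖(c • w) j‖) = |c| • fun j => ‖w j‖ := by
    funext j; simp [norm_smul, Real.norm_eq_abs]
  show Y.Mem _
  rw [h]; exact Y.smul_mem _ hw

lemma lnrm_add_le {w z : ℕ → E} (hw : Lmem Y w) (hz : Lmem Y z) :
    Lnrm Y (w + z) ≤ Lnrm Y w + Lnrm Y z := by
  refine le_trans (Y.nrm_mono (Y.add_mem hw hz) (fun n => ?_)) (Y.nrm_add_le hw hz)
  have h1 : (0:ℝ) ≤ ‖w n‖ + ‖z n‖ := by positivity
  rw [abs_of_nonneg (norm_nonneg _)]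
  show ‖w n + z n‖ ≤ |‖w n‖ + ‖z n‖|
  rw [abs_of_nonneg h1]
  exact norm_add_le _ _

lemma lnrm_le {w : ℕ → E} {α : ℕ → ℝ} (hα : Y.Mem α) (h : ∀ n, ‖w n‖ ≤ |α n|) :
    Lnrm Y w ≤ Y.nrm α :=
  Y.nrm_mono hα (fun n => by rw [abs_of_nonneg (norm_nonneg _)]; exact h n)

lemma lnrm_smul (c : ℝ) (w : ℕ → E) : Lnrm Y (c • w) = |c| * Lnrm Y w := by
  have h : (fun j => ‖(c • w) j‖) = |c| • fun j => ‖w j‖ := by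
    funext j; simp [norm_smul, Real.norm_eq_abs]
  show Y.nrm _ = _
  rw [h, Y.nrm_smul, abs_abs]; rfl

lemma lnrm_self_sub (w : ℕ → E) : Lnrm Y (w - w) = 0 := by
  have : w - w = (0 : ℕ → E) := sub_self w
  rw [this]
  show Y.nrm _ = 0
  have h : (fun j => ‖(0 : ℕ → E) j‖) = (0 : ℕ → ℝ) := by funext j; simp
  rw [h, nrm_zero]

lemma l0mem_evzero {v : ℕ → E} {N : ℕ} (h : ∀ j, N ≤ j → v j = 0) : L0mem Y v := by
  refine ⟨lmem_of_evzero Y h, fun ε hε => ⟨v, ⟨N, h⟩, ?_⟩⟩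
  rw [lnrm_self_sub]; exact hε

lemma l0mem_add {w z : ℕ → E} (hw : L0mem Y w) (hz : L0mem Y z) : L0mem Y (w + z) := by
  refine ⟨lmem_add Y hw.1 hz.1, fun ε hε => ?_⟩
  obtain ⟨v1, ⟨N1, hN1⟩, hv1⟩ := hw.2 (ε/2) (by positivity)
  obtain ⟨v2, ⟨N2, hN2⟩, hv2⟩ := hz.2 (ε/2) (by positivity)
  refine ⟨v1 + v2, ⟨max N1 N2, fun j hj => ?_⟩, ?_⟩
  · show v1 j + v2 j = 0
    rw [hN1 j (le_trans (le_max_left _ _) hj), hN2 j (le_trans (le_max_right _ _) hj), add_zero]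
  · have heq : (w + z) - (v1 + v2) = (w - v1) + (z - v2) := by abel
    rw [heq]
    have h1 : Lmem Y (w - v1) := lmem_sub Y hw.1 (lmem_of_evzero Y hN1)
    have h2 : Lmem Y (z - v2) := lmem_sub Y hz.1 (lmem_of_evzero Y hN2)
    calc Lnrm Y ((w - v1) + (z - v2)) ≤ Lnrm Y (w - v1) + Lnrm Y (z - v2) :=
          lnrm_add_le Y h1 h2
      _ < ε/2 + ε/2 := by exact add_lt_add hv1 hv2
      _ = ε := by ring

lemma l0mem_smul (c : ℝ) {w : ℕ → E} (hw : L0mem Y w) : L0mem Y (c • w) := by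
  refine ⟨lmem_smul Y c hw.1, fun ε hε => ?_⟩
  by_cases hc : c = 0
  · refine ⟨0, ⟨0, fun j _ => rfl⟩, ?_⟩
    have : c • w - 0 = (0 : ℕ → E) := by rw [hc]; simp
    rw [this]
    show Y.nrm _ < ε
    have h : (fun j => ‖(0 : ℕ → E) j‖) = (0 : ℕ → ℝ) := by funext j; simp
    rw [h, nrm_zero]; exact hε
  · have hc' : 0 < |c| := abs_pos.mpr hc
    obtain ⟨v, ⟨N, hN⟩, hv⟩ := hw.2 (ε/|c|) (by positivity)
    refine ⟨c • v, ⟨N, fun j hj => ?_⟩, ?_⟩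
    · show c • v j = 0
      rw [hN j hj, smul_zero]
    · have heq : c • w - c • v = c • (w - v) := by rw [smul_sub]
      rw [heq, lnrm_smul]
      calc |c| * Lnrm Y (w - v) < |c| * (ε/|c|) := by
            exact mul_lt_mul_of_pos_left hv hc'
        _ = ε := by field_simp

lemma l0mem_sub {w z : ℕ → E} (hw : L0mem Y w) (hz : L0mem Y z) : L0mem Y (w - z) := by
  have h : w - z = w + (-1 : ℝ) • z := by
    funext j; simp [sub_eq_add_neg]
  rw [h]
  exact l0mem_add Y hw (l0mem_smul Y (-1) hz)

lemma exists_near (T : E →L[ℝ] ℝ) (c : ℝ) {ε : ℝ} (hε : 0 < ε) :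
    ∃ e : E, ‖e‖ ≤ |c| ∧ |c| * ‖T‖ - ε ≤ T e := by
  by_cases h : |c| * ‖T‖ ≤ ε
  · exact ⟨0, by simp, by simp; linarith⟩
  · push_neg at h
    have hc : 0 < |c| := by
      rcases (abs_nonneg c).lt_or_eq with h1 | h1
      · exact h1
      · exfalso; rw [← h1] at h; simp at h; linarith
    have hT : ‖T‖ - ε/|c| < ‖T‖ := by
      have : 0 < ε/|c| := by positivity
      linarith
    obtain ⟨x, hx1, hx2⟩ := T.exists_lt_apply_of_lt_opNorm hT
    rw [Real.norm_eq_abs] at hx2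
    rcases le_or_gt 0 (T x) with hs | hs
    · refine ⟨|c| • x, ?_, ?_⟩
      · rw [norm_smul, Real.norm_eq_abs, abs_abs]
        calc |c| * ‖x‖ ≤ |c| * 1 := by
              exact mul_le_mul_of_nonneg_left (le_of_lt hx1) (le_of_lt hc)
          _ = |c| := mul_one _
      · rw [map_smul, smul_eq_mul]
        rw [abs_of_nonneg hs] at hx2
        have := mul_le_mul_of_nonneg_left (le_of_lt hx2) (le_of_lt hc)
        calc |c| * ‖T‖ - ε = |c| * (‖T‖ - ε/|c|) := by field_simp
          _ ≤ |c| * T x := this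
    · refine ⟨(-|c|) • x, ?_, ?_⟩
      · rw [norm_smul, Real.norm_eq_abs, abs_neg, abs_abs]
        calc |c| * ‖x‖ ≤ |c| * 1 := by
              exact mul_le_mul_of_nonneg_left (le_of_lt hx1) (le_of_lt hc)
          _ = |c| := mul_one _
      · rw [map_smul, smul_eq_mul]
        rw [abs_of_neg hs] at hx2
        have := mul_le_mul_of_nonneg_left (le_of_lt hx2) (le_of_lt hc)
        calc |c| * ‖T‖ - ε = |c| * (‖T‖ - ε/|c|) := by field_simp
          _ ≤ |c| * (-T x) := this
          _ = (-|c|) * T x := by ring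

lemma sum_pow_half_le {ε : ℝ} (hε : 0 ≤ ε) (N : ℕ) :
    ∑ n ∈ Finset.range N, ε / 2 ^ (n + 1) ≤ ε := by
  have h1 : ∀ n : ℕ, ε / 2 ^ (n + 1) = (ε / 2) * (1 / 2 : ℝ) ^ n := by
    intro n
    rw [div_pow, one_pow, pow_succ]
    ring
  calc ∑ n ∈ Finset.range N, ε / 2 ^ (n + 1)
      = (ε / 2) * ∑ n ∈ Finset.range N, (1 / 2 : ℝ) ^ n := by
        rw [Finset.mul_sum]
        exact Finset.sum_congr rfl (fun n _ => h1 n)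
    _ ≤ (ε / 2) * 2 := by
        have := sum_geometric_two_le N
        have h2 : (0:ℝ) ≤ ε / 2 := by positivity
        exact mul_le_mul_of_nonneg_left this h2
    _ = ε := by ring

/-- Construction: a finitely supported vector sequence nearly attaining
`∑_{n<N} |α n| * ‖s n‖` with `‖w j‖ ≤ |α j|`. -/
lemma exists_attain (s : ℕ → E →L[ℝ] ℝ) (α : ℕ → ℝ) (N : ℕ) {ε : ℝ} (hε : 0 < ε) :
    ∃ w : ℕ → E, (∀ j, N ≤ j → w j = 0) ∧ (∀ j, ‖w j‖ ≤ |α j|) ∧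
      ∑ n ∈ Finset.range N, (|α n| * ‖s n‖) - ε ≤ ∑ n ∈ Finset.range N, s n (w n) := by
  have hch : ∀ n : ℕ, ∃ e : E, ‖e‖ ≤ |α n| ∧ |α n| * ‖s n‖ - ε / 2 ^ (n + 1) ≤ s n e :=
    fun n => exists_near (s n) (α n) (by positivity)
  choose e he1 he2 using hch
  refine ⟨fun j => if j < N then e j else 0, fun j hj => by simp [Nat.not_lt.mpr hj], ?_, ?_⟩
  · intro j
    by_cases h : j < N
    · simpa [h] using he1 j
    · simp [h]
  · have hsum : ∑ n ∈ Finset.range N, s n ((fun j => if j < N then e j else 0) n)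
        = ∑ n ∈ Finset.range N, s n (e n) := by
      refine Finset.sum_congr rfl (fun n hn => ?_)
      rw [Finset.mem_range] at hn
      simp [hn]
    rw [hsum]
    have h1 : ∑ n ∈ Finset.range N, (|α n| * ‖s n‖) - ε
        ≤ ∑ n ∈ Finset.range N, (|α n| * ‖s n‖ - ε / 2 ^ (n + 1)) := by
      rw [Finset.sum_sub_distrib]
      have := sum_pow_half_le (le_of_lt hε) N
      linarith
    refine le_trans h1 (Finset.sum_le_sum (fun n _ => he2 n))

lemma summable_mul (s : ℕ → E →L[ℝ] ℝ) (hs : Kmem Y (fun n => ‖s n‖)) {w : ℕ → E}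
    (hw : Lmem Y w) : Summable (fun n => |‖w n‖ * ‖s n‖|) :=
  hs (fun n => ‖w n‖) hw

lemma summable_abs_apply (s : ℕ → E →L[ℝ] ℝ) (hs : Kmem Y (fun n => ‖s n‖)) {w : ℕ → E}
    (hw : Lmem Y w) : Summable (fun n => |s n (w n)|) := by
  refine Summable.of_nonneg_of_le (fun n => abs_nonneg _) (fun n => ?_) (summable_mul Y s hs hw)
  calc |s n (w n)| ≤ ‖s n‖ * ‖w n‖ := by
        simpa [Real.norm_eq_abs] using (s n).le_opNorm (w n)
    _ = |‖w n‖ * ‖s n‖| := by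
        rw [abs_of_nonneg (by positivity)]; ring

lemma summable_apply (s : ℕ → E →L[ℝ] ℝ) (hs : Kmem Y (fun n => ‖s n‖)) {w : ℕ → E}
    (hw : Lmem Y w) : Summable (fun n => s n (w n)) := by
  have := summable_abs_apply Y s hs hw
  exact Summable.of_abs this

lemma abs_tsum_le (s : ℕ → E →L[ℝ] ℝ) (hs : Kmem Y (fun n => ‖s n‖)) {w : ℕ → E}
    (hw : Lmem Y w) : |∑' n, s n (w n)| ≤ ∑' n, |‖w n‖ * ‖s n‖| := by
  have h1 : |∑' n, s n (w n)| ≤ ∑' n, |s n (w n)| := by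
    simpa [Real.norm_eq_abs] using
      norm_tsum_le_tsum_norm (f := fun n => s n (w n))
        (by simpa [Real.norm_eq_abs] using summable_abs_apply Y s hs hw)
  refine le_trans h1 (Summable.tsum_le_tsum (fun n => ?_) (summable_abs_apply Y s hs hw)
    (summable_mul Y s hs hw))
  calc |s n (w n)| ≤ ‖s n‖ * ‖w n‖ := by
        simpa [Real.norm_eq_abs] using (s n).le_opNorm (w n)
    _ = |‖w n‖ * ‖s n‖| := by
        rw [abs_of_nonneg (by positivity)]; ring

lemma lnrm_zero : Lnrm Y (0 : ℕ → E) = 0 := by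
  show Y.nrm _ = 0
  have h : (fun j => ‖(0 : ℕ → E) j‖) = (0 : ℕ → ℝ) := by funext j; simp
  rw [h, nrm_zero]

lemma part1 [CompleteSpace E] (s : ℕ → E →L[ℝ] ℝ) (hs : Kmem Y (fun n => ‖s n‖)) :
    (∀ w : ℕ → E, L0mem Y w → Summable (fun n => |s n (w n)|)) ∧
    sSup {r : ℝ | ∃ w : ℕ → E, L0mem Y w ∧ Lnrm Y w ≤ 1 ∧ r = |∑' n, s n (w n)|} =
      Knrm Y (fun n => ‖s n‖) := by
  refine ⟨fun w hw => summable_abs_apply Y s hs hw.1, ?_⟩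
  set A := {r : ℝ | ∃ w : ℕ → E, L0mem Y w ∧ Lnrm Y w ≤ 1 ∧ r = |∑' n, s n (w n)|} with hA
  set K := {t : ℝ | ∃ α : ℕ → ℝ, Y.Mem α ∧ Y.nrm α ≤ 1 ∧ t = ∑' n, |α n * ‖s n‖|} with hK
  have hKnrm : Knrm Y (fun n => ‖s n‖) = sSup K := rfl
  rw [hKnrm]
  have claim1 : ∀ r ∈ A, ∃ k ∈ K, r ≤ k := by
    rintro r ⟨w, hw, hw1, rfl⟩
    exact ⟨∑' n, |‖w n‖ * ‖s n‖|, ⟨fun n => ‖w n‖, hw.1, hw1, rfl⟩, abs_tsum_le Y s hs hw.1⟩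
  have claim2 : ∀ k ∈ K, ∀ ε : ℝ, 0 < ε → ∃ r ∈ A, k - ε ≤ r := by
    rintro k ⟨α, hα, hα1, rfl⟩ ε hε
    have hsum : Summable (fun n => |α n * ‖s n‖|) := hs α hα
    have hex : ∃ N, (∑' n, |α n * ‖s n‖|) - ε/2 ≤ ∑ n ∈ Finset.range N, |α n * ‖s n‖| := by
      by_contra hcon
      push_neg at hcon
      have := Summable.tsum_le_of_sum_range_le hsum (fun N => le_of_lt (hcon N))
      linarith
    obtain ⟨N, hN⟩ := hex
    obtain ⟨w, hw0, hwle, hwge⟩ := exists_attain s α N (show (0:ℝ) < ε/2 by positivity)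
    have hLw : L0mem Y w := l0mem_evzero Y hw0
    have hl1 : Lnrm Y w ≤ 1 := le_trans (lnrm_le Y hα hwle) hα1
    refine ⟨|∑' n, s n (w n)|, ⟨w, hLw, hl1, rfl⟩, ?_⟩
    have heq : ∑' n, s n (w n) = ∑ n ∈ Finset.range N, s n (w n) := by
      refine tsum_eq_sum (fun b hb => ?_)
      rw [Finset.mem_range] at hb
      rw [hw0 b (le_of_not_gt hb)]
      simp
    have h2 : ∑ n ∈ Finset.range N, (|α n| * ‖s n‖) = ∑ n ∈ Finset.range N, |α n * ‖s n‖| := by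
      refine Finset.sum_congr rfl (fun n _ => ?_)
      rw [abs_mul, abs_of_nonneg (norm_nonneg _)]
    calc (∑' n, |α n * ‖s n‖|) - ε ≤ (∑ n ∈ Finset.range N, |α n * ‖s n‖|) - ε/2 := by linarith
      _ = ∑ n ∈ Finset.range N, (|α n| * ‖s n‖) - ε/2 := by rw [h2]
      _ ≤ ∑ n ∈ Finset.range N, s n (w n) := hwge
      _ ≤ |∑' n, s n (w n)| := by rw [heq]; exact le_abs_self _
  have h0A : (0:ℝ) ∈ A := by
    refine ⟨0, l0mem_evzero Y (N := 0) (fun j _ => rfl), ?_, by simp⟩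
    rw [lnrm_zero]; norm_num
  have h0K : (0:ℝ) ∈ K := by
    refine ⟨0, Y.zero_mem, ?_, by simp⟩
    rw [nrm_zero]; norm_num
  by_cases hb : BddAbove K
  · obtain ⟨M, hM⟩ := hb
    have hbA : BddAbove A := by
      refine ⟨M, fun r hr => ?_⟩
      obtain ⟨k, hk, hrk⟩ := claim1 r hr
      exact le_trans hrk (hM hk)
    apply le_antisymm
    · apply csSup_le ⟨0, h0A⟩
      intro r hr
      obtain ⟨k, hk, hrk⟩ := claim1 r hr
      exact le_trans hrk (le_csSup ⟨M, hM⟩ hk)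
    · apply csSup_le ⟨0, h0K⟩
      intro k hk
      refine le_of_forall_pos_le_add (fun ε hε => ?_)
      obtain ⟨r, hr, hkr⟩ := claim2 k hk ε hε
      have := le_csSup hbA hr
      linarith
  · have hbA : ¬ BddAbove A := by
      rintro ⟨M, hM⟩
      apply hb
      refine ⟨M, fun k hk => ?_⟩
      refine le_of_forall_pos_le_add (fun ε hε => ?_)
      obtain ⟨r, hr, hkr⟩ := claim2 k hk ε hε
      have := hM hr
      linarith
    rw [Real.sSup_of_not_bddAbove hbA, Real.sSup_of_not_bddAbove hb]

/-- The sequence with `e` in position `n` and `0` elsewhere. -/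
def sgl (n : ℕ) (e : E) : ℕ → E := fun j => if j = n then e else 0

lemma sgl_evzero (n : ℕ) (e : E) : ∀ j, n + 1 ≤ j → sgl n e j = 0 := by
  intro j hj
  have : j ≠ n := by omega
  simp [sgl, this]

lemma l0mem_sgl (n : ℕ) (e : E) : L0mem Y (sgl n e) :=
  l0mem_evzero Y (sgl_evzero n e)

lemma norm_sgl (n : ℕ) (e : E) :
    (fun j => ‖sgl n e j‖) = ‖e‖ • (fun k => if k = n then (1:ℝ) else 0) := by
  funext j
  by_cases h : j = n
  · simp [sgl, h]
  · simp [sgl, h]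

lemma lnrm_sgl (n : ℕ) (e : E) :
    Lnrm Y (sgl n e) = ‖e‖ * Y.nrm (fun k => if k = n then (1:ℝ) else 0) := by
  show Y.nrm _ = _
  rw [norm_sgl, Y.nrm_smul, abs_of_nonneg (norm_nonneg e)]

lemma sgl_add (n : ℕ) (e e' : E) : sgl n (e + e') = sgl n e + sgl n e' := by
  funext j
  by_cases h : j = n <;> simp [sgl, h]

lemma sgl_smul (n : ℕ) (c : ℝ) (e : E) : sgl n (c • e) = c • sgl n e := by
  funext j
  by_cases h : j = n <;> simp [sgl, h]

lemma part2 [CompleteSpace E] (φ : (ℕ → E) → ℝ)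
    (hadd : ∀ w z : ℕ → E, L0mem Y w → L0mem Y z → φ (w + z) = φ w + φ z)
    (hsmul : ∀ (c : ℝ) (w : ℕ → E), L0mem Y w → φ (c • w) = c * φ w)
    (hbdd : ∃ M : ℝ, 0 ≤ M ∧ ∀ w : ℕ → E, L0mem Y w → |φ w| ≤ M * Lnrm Y w) :
    ∃ s : ℕ → (E →L[ℝ] ℝ), Kmem Y (fun n => ‖s n‖) ∧
      (∀ w : ℕ → E, L0mem Y w → φ w = ∑' n, s n (w n)) ∧
      Knrm Y (fun n => ‖s n‖) =
        sInf {M : ℝ | 0 ≤ M ∧ ∀ w : ℕ → E, L0mem Y w → |φ w| ≤ M * Lnrm Y w} := by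
  obtain ⟨M, hM0, hMb⟩ := hbdd
  have hφ0 : φ 0 = 0 := by
    have h := hsmul 0 0 (l0mem_evzero Y (N := 0) (v := (0 : ℕ → E)) (fun j _ => rfl))
    simpa using h
  have hlin1 : ∀ (n : ℕ) (e e' : E), φ (sgl n (e + e')) = φ (sgl n e) + φ (sgl n e') := by
    intro n e e'
    rw [sgl_add]
    exact hadd _ _ (l0mem_sgl Y n e) (l0mem_sgl Y n e')
  have hlin2 : ∀ (n : ℕ) (c : ℝ) (e : E), φ (sgl n (c • e)) = c * φ (sgl n e) := by
    intro n c e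
    rw [sgl_smul]
    exact hsmul c _ (l0mem_sgl Y n e)
  set s : ℕ → E →L[ℝ] ℝ := fun n =>
    LinearMap.mkContinuous
      { toFun := fun e => φ (sgl n e)
        map_add' := hlin1 n
        map_smul' := fun c e => by simpa using hlin2 n c e }
      (M * Y.nrm (fun k => if k = n then (1:ℝ) else 0))
      (fun e => by
        show |φ (sgl n e)| ≤ _
        calc |φ (sgl n e)| ≤ M * Lnrm Y (sgl n e) := hMb _ (l0mem_sgl Y n e)
          _ = M * (‖e‖ * Y.nrm (fun k => if k = n then (1:ℝ) else 0)) := by rw [lnrm_sgl]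
          _ = M * Y.nrm (fun k => if k = n then (1:ℝ) else 0) * ‖e‖ := by
              ring) with hsdef
  have hsapp : ∀ (n : ℕ) (e : E), s n e = φ (sgl n e) := fun n e => rfl
  have hL0sum : ∀ (N : ℕ) (u : ℕ → (ℕ → E)), (∀ n, L0mem Y (u n)) →
      L0mem Y (∑ n ∈ Finset.range N, u n) := by
    intro N u hu
    induction N with
    | zero => simpa using l0mem_evzero Y (N := 0) (v := (0 : ℕ → E)) (fun j _ => rfl)
    | succ N ih =>
        rw [Finset.sum_range_succ]
        exact l0mem_add Y ih (hu N)
  have hφsum : ∀ (N : ℕ) (u : ℕ → (ℕ → E)), (∀ n, L0mem Y (u n)) →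
      φ (∑ n ∈ Finset.range N, u n) = ∑ n ∈ Finset.range N, φ (u n) := by
    intro N u hu
    induction N with
    | zero => simpa using hφ0
    | succ N ih =>
        rw [Finset.sum_range_succ, Finset.sum_range_succ,
          hadd _ _ (hL0sum N u hu) (hu N), ih]
  have hdecomp : ∀ (w : ℕ → E) (N : ℕ), (∀ j, N ≤ j → w j = 0) →
      w = ∑ n ∈ Finset.range N, sgl n (w n) := by
    intro w N hw
    funext j
    rw [Finset.sum_apply]
    by_cases hj : j < N
    · rw [Finset.sum_eq_single_of_mem j (Finset.mem_range.mpr hj)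
        (fun b _ hb => by simp [sgl, Ne.symm hb])]
      simp [sgl]
    · rw [hw j (le_of_not_gt hj)]
      refine (Finset.sum_eq_zero (fun b hb => ?_)).symm
      rw [Finset.mem_range] at hb
      have : j ≠ b := by omega
      simp [sgl, this]
  have hev : ∀ (w : ℕ → E) (N : ℕ), (∀ j, N ≤ j → w j = 0) →
      φ w = ∑ n ∈ Finset.range N, s n (w n) := by
    intro w N hw
    conv_lhs => rw [hdecomp w N hw]
    rw [hφsum N _ (fun n => l0mem_sgl Y n (w n))]
    exact Finset.sum_congr rfl (fun n _ => (hsapp n (w n)).symm)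
  have hD : ∀ M' : ℝ, 0 ≤ M' → (∀ w : ℕ → E, L0mem Y w → |φ w| ≤ M' * Lnrm Y w) →
      ∀ α : ℕ → ℝ, Y.Mem α → ∀ N, ∑ n ∈ Finset.range N, |α n * ‖s n‖| ≤ M' * Y.nrm α := by
    intro M' hM'0 hM' α hα N
    refine le_of_forall_pos_le_add (fun ε hε => ?_)
    obtain ⟨w, hw0, hwle, hwge⟩ := exists_attain s α N hε
    have hLw := l0mem_evzero Y hw0
    have h1 : φ w = ∑ n ∈ Finset.range N, s n (w n) := hev w N hw0
    have h2 : |φ w| ≤ M' * Y.nrm α :=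
      le_trans (hM' w hLw) (mul_le_mul_of_nonneg_left (lnrm_le Y hα hwle) hM'0)
    have h3 : ∑ n ∈ Finset.range N, |α n * ‖s n‖| = ∑ n ∈ Finset.range N, (|α n| * ‖s n‖) := by
      refine Finset.sum_congr rfl (fun n _ => ?_)
      rw [abs_mul, abs_of_nonneg (norm_nonneg _)]
    rw [h3]
    have h4 : ∑ n ∈ Finset.range N, s n (w n) ≤ |φ w| := by
      rw [h1] at *
      exact le_abs_self _
    linarith
  have hKm : Kmem Y (fun n => ‖s n‖) := by
    intro α hα
    exact summable_of_sum_range_le (c := M * Y.nrm α) (fun n => abs_nonneg _)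
      (fun N => hD M hM0 hMb α hα N)
  have hDt : ∀ M' : ℝ, 0 ≤ M' → (∀ w : ℕ → E, L0mem Y w → |φ w| ≤ M' * Lnrm Y w) →
      ∀ α : ℕ → ℝ, Y.Mem α → ∑' n, |α n * ‖s n‖| ≤ M' * Y.nrm α := by
    intro M' hM'0 hM' α hα
    exact Summable.tsum_le_of_sum_range_le (hKm α hα) (hD M' hM'0 hM' α hα)
  have hrep : ∀ w : ℕ → E, L0mem Y w → φ w = ∑' n, s n (w n) := by
    intro w hw
    have hsumw : Summable (fun n => s n (w n)) := summable_apply Y s hKm hw.1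
    have key : ∀ ε : ℝ, 0 < ε → |φ w - ∑' n, s n (w n)| ≤ ε := by
      intro ε hε
      have hden : (0:ℝ) < 2 * M + 1 := by linarith
      set δ := ε / (2 * M + 1) with hδdef
      have hδ : 0 < δ := by positivity
      obtain ⟨v, ⟨N, hN⟩, hv⟩ := hw.2 δ hδ
      have hvL : L0mem Y v := l0mem_evzero Y hN
      have hwv : L0mem Y (w - v) := l0mem_sub Y hw hvL
      have e1 : φ (w - v) = φ w - φ v := by
        have h := hadd (w - v) v hwv hvL
        rw [sub_add_cancel] at h
        linarith
      have e2 : |φ (w - v)| ≤ M * δ :=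
        le_trans (hMb _ hwv) (mul_le_mul_of_nonneg_left (le_of_lt hv) hM0)
      have hsv : Summable (fun n => s n (v n)) := summable_apply Y s hKm hvL.1
      have e3 : (∑' n, s n (w n)) - (∑' n, s n (v n)) = ∑' n, s n ((w - v) n) := by
        rw [← Summable.tsum_sub hsumw hsv]
        congr 1
        funext n
        rw [Pi.sub_apply, map_sub]
      have e4 : |∑' n, s n ((w - v) n)| ≤ M * δ := by
        refine le_trans (abs_tsum_le Y s hKm hwv.1) ?_
        refine le_trans (hDt M hM0 hMb (fun j => ‖(w - v) j‖) hwv.1) ?_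
        exact mul_le_mul_of_nonneg_left (le_of_lt hv) hM0
      have e5 : φ v = ∑' n, s n (v n) := by
        rw [hev v N hN]
        refine (tsum_eq_sum (fun b hb => ?_)).symm
        rw [Finset.mem_range] at hb
        rw [hN b (le_of_not_gt hb)]
        simp
      have e6 : φ w - ∑' n, s n (w n) = φ (w - v) - ∑' n, s n ((w - v) n) := by
        rw [← e3, e1, e5]
        ring
      have e7 : |φ w - ∑' n, s n (w n)| ≤ 2 * M * δ := by
        rw [e6, sub_eq_add_neg]
        calc |φ (w - v) + -(∑' n, s n ((w - v) n))|
            ≤ |φ (w - v)| + |-(∑' n, s n ((w - v) n))| := abs_add_le _ _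
          _ = |φ (w - v)| + |∑' n, s n ((w - v) n)| := by rw [abs_neg]
          _ ≤ M * δ + M * δ := add_le_add e2 e4
          _ = 2 * M * δ := by ring
      refine le_trans e7 ?_
      have hδε : δ * (2 * M + 1) = ε := by
        rw [hδdef]; field_simp
      nlinarith
    have h0 : |φ w - ∑' n, s n (w n)| ≤ 0 :=
      le_of_forall_pos_le_add (fun ε hε => by simpa using key ε hε)
    have h1 := abs_nonneg (φ w - ∑' n, s n (w n))
    have h2 : φ w - ∑' n, s n (w n) = 0 := abs_eq_zero.mp (le_antisymm h0 h1)
    linarith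
  refine ⟨s, hKm, hrep, ?_⟩
  set Sset := {M' : ℝ | 0 ≤ M' ∧ ∀ w : ℕ → E, L0mem Y w → |φ w| ≤ M' * Lnrm Y w} with hSdef
  have hSne : Sset.Nonempty := ⟨M, hM0, hMb⟩
  have hSbdd : BddBelow Sset := ⟨0, fun x hx => hx.1⟩
  set K := {t : ℝ | ∃ α : ℕ → ℝ, Y.Mem α ∧ Y.nrm α ≤ 1 ∧ t = ∑' n, |α n * ‖s n‖|} with hKdef
  have hKnrm : Knrm Y (fun n => ‖s n‖) = sSup K := rfl
  have hKset : ∀ t ∈ K, ∀ M' ∈ Sset, t ≤ M' := by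
    rintro t ⟨α, hα, hα1, rfl⟩ M' ⟨hM'0, hM'b⟩
    calc ∑' n, |α n * ‖s n‖| ≤ M' * Y.nrm α := hDt M' hM'0 hM'b α hα
      _ ≤ M' * 1 := mul_le_mul_of_nonneg_left hα1 hM'0
      _ = M' := mul_one _
  have hbK : BddAbove K := ⟨M, fun t ht => hKset t ht M ⟨hM0, hMb⟩⟩
  have h0K : (0:ℝ) ∈ K := by
    refine ⟨0, Y.zero_mem, ?_, by simp⟩
    rw [nrm_zero]; norm_num
  have hKnonneg : 0 ≤ Knrm Y (fun n => ‖s n‖) := by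
    rw [hKnrm]
    exact le_csSup hbK h0K
  have hKb : Knrm Y (fun n => ‖s n‖) ≤ sInf Sset := by
    refine le_csInf hSne (fun M' hM' => ?_)
    rw [hKnrm]
    exact Real.sSup_le (fun t ht => hKset t ht M' hM') hM'.1
  have hKmemS : Knrm Y (fun n => ‖s n‖) ∈ Sset := by
    refine ⟨hKnonneg, fun w hw => ?_⟩
    rw [hrep w hw]
    refine le_trans (abs_tsum_le Y s hKm hw.1) ?_
    by_cases h0 : Y.nrm (fun j => ‖w j‖) = 0
    · have hzf : (fun j => ‖w j‖) = (0 : ℕ → ℝ) := (Y.nrm_eq_zero_iff hw.1).mp h0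
      have hz : ∀ n : ℕ, |‖w n‖ * ‖s n‖| = 0 := by
        intro n
        have h := congrFun hzf n
        simp only [Pi.zero_apply] at h
        rw [h]
        simp
      have hL : Lnrm Y w = 0 := h0
      have hts : (∑' n, |‖w n‖ * ‖s n‖|) = 0 := by
        rw [tsum_congr hz, tsum_zero]
      rw [hL, mul_zero]
      exact le_of_eq hts
    · have hpos : 0 < Y.nrm (fun j => ‖w j‖) :=
        lt_of_le_of_ne (Y.nrm_nonneg _) (Ne.symm h0)
      set c := (Y.nrm (fun j => ‖w j‖))⁻¹ with hcdef
      have hc : 0 < c := inv_pos.mpr hpos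
      have hmem' : Y.Mem (c • fun j => ‖w j‖) := Y.smul_mem c hw.1
      have hn1 : Y.nrm (c • fun j => ‖w j‖) ≤ 1 := by
        rw [Y.nrm_smul, abs_of_pos hc, hcdef, inv_mul_cancel₀ h0]
      have helt : (∑' n, |(c • fun j => ‖w j‖) n * ‖s n‖|) ∈ K := ⟨_, hmem', hn1, rfl⟩
      have hle := le_csSup hbK helt
      have hsc : (∑' n, |(c • fun j => ‖w j‖) n * ‖s n‖|) = c * ∑' n, |‖w n‖ * ‖s n‖| := by
        rw [← tsum_mul_left]
        refine tsum_congr (fun n => ?_)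
        show |(c * ‖w n‖) * ‖s n‖| = c * |‖w n‖ * ‖s n‖|
        rw [mul_assoc, abs_mul, abs_of_pos hc]
      rw [hsc] at hle
      have h5 := mul_le_mul_of_nonneg_left hle (le_of_lt hpos)
      rw [← mul_assoc, hcdef, mul_inv_cancel₀ h0, one_mul] at h5
      rw [hKnrm]
      calc ∑' n, |‖w n‖ * ‖s n‖| ≤ Y.nrm (fun j => ‖w j‖) * sSup K := h5
        _ = sSup K * Lnrm Y w := mul_comm _ _
  exact le_antisymm hKb (csInf_le hSbdd hKmemS)

end Stmt17Aux

/-- The dual of `ℓ₀^Y(E)` is `ℓ^{Y^×}(E*)`: the map `ρ(s)(w) = Σ_n s_n(w_n)` is a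
well-defined isometry from `ℓ^{Y^×}(E*)` into the dual of `ℓ₀^Y(E)`, and every
continuous linear functional on `ℓ₀^Y(E)` arises this way. -/
theorem stmt17 (Y : BanachSeqLattice) {E : Type*}
    [NormedAddCommGroup E] [NormedSpace ℝ E] [CompleteSpace E] :
    -- `ρ` is well defined and isometric:
    (∀ s : ℕ → (E →L[ℝ] ℝ), Kmem Y (fun n => ‖s n‖) →
      (∀ w : ℕ → E, L0mem Y w → Summable (fun n => |s n (w n)|)) ∧
      sSup {r : ℝ | ∃ w : ℕ → E, L0mem Y w ∧ Lnrm Y w ≤ 1 ∧ r = |∑' n, s n (w n)|} =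
        Knrm Y (fun n => ‖s n‖)) ∧
    -- `ρ` is surjective: every continuous linear functional on `ℓ₀^Y(E)` is some `ρ(s)`:
    (∀ φ : (ℕ → E) → ℝ,
      (∀ w z : ℕ → E, L0mem Y w → L0mem Y z → φ (w + z) = φ w + φ z) →
      (∀ (c : ℝ) (w : ℕ → E), L0mem Y w → φ (c • w) = c * φ w) →
      (∃ M : ℝ, 0 ≤ M ∧ ∀ w : ℕ → E, L0mem Y w → |φ w| ≤ M * Lnrm Y w) →
      ∃ s : ℕ → (E →L[ℝ] ℝ), Kmem Y (fun n => ‖s n‖) ∧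
        (∀ w : ℕ → E, L0mem Y w → φ w = ∑' n, s n (w n)) ∧
        Knrm Y (fun n => ‖s n‖) =
          sInf {M : ℝ | 0 ≤ M ∧ ∀ w : ℕ → E, L0mem Y w → |φ w| ≤ M * Lnrm Y w}) := by
  exact ⟨fun s hs => Stmt17Aux.part1 Y s hs,
    fun φ hadd hsmul hbdd => Stmt17Aux.part2 Y φ hadd hsmul hbdd⟩
end
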